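/- arXiv:2302.03142 — 2 statements merged into one kernel-verified Lean document; each statement's English description precedes it below -/
import Mathlib

section
/- Let R be a commutative ring and M an additive cancellative commutative monoid. Let t ≥ 1, let a_V and a_1, …, a_t be elements of M, and let V, V_1, …, V_t, N_1, …, N_t, L_1, …, L_{t+1} be elements of the additive monoid algebra R[M]. Assume: (i) L_1 = single(a_V, 1) * V; (ii) for every k with 1 ≤ k ≤ t, single(a_k, 1) * L_k = L_{k+1} * N_k; (iii) L_{t+1} = single(a_V, 1); (iv) for every k, N_k = single(a_k, 1) * V_k. Then V = V_1 * V_2 * ⋯ * V_t; equivalently, for every β ∈ M, V(β) = Σ_{β_1 + ⋯ + β_t = β} Π_{s=1}^t V_s(β_s). (This is the algebraic form of the paper's main Theorem 'reduction-primitive-twig': with M = NE(Y), V(β) = N(V, β) the count of primitive infinitesimal tropical cylinders of twig type (w_s), V_s(β) = N(V_s, β) the count for the elementary cylinder of twig type w_s, hypothesis (i) encodes the passage to the extended cylinder and the identification N(L_1, β) = N(V̂, β), hypothesis (ii) is the splitting formula of Proposition 'splitting-formula', hypothesis (iii) is the evaluation of N(L_{t+1}, ·) as a delta function from Proposition 'compute-L',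 and hypothesis (iv) encodes N(N_s, γ) = N(V_s, γ − δ̂_s).) -/
/-!
In a cancellative monoid, multiplication by a monomial `single a 1` is injective. Cancelling
`single a_k 1` turns (ii) and (iv) into `L_k = L_{k+1} * V_k`, which telescopes to
`L_1 = L_{t+1} * V_1 ⋯ V_t`; by (i) and (iii) this reads
`single a_V 1 * V = single a_V 1 * V_1 ⋯ V_t`, and one more cancellation gives the claim.
-/

theorem AddMonoidAlgebra.isLeftRegular_single_one {R M : Type*} [Semiring R] [AddCancelMonoid M]
    (c : M) : IsLeftRegular (AddMonoidAlgebra.single c (1 : R)) := by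
  intro f g h
  ext m
  simpa using congrArg (·.coeff (c + m)) h

theorem Fin.apply_zero_eq_apply_last_mul_prod {M : Type*} [CommMonoid M] :
    ∀ {t : ℕ} (f : Fin (t + 1) → M) (g : Fin t → M),
      (∀ k : Fin t, f k.castSucc = f k.succ * g k) → f 0 = f (Fin.last t) * ∏ k, g k
  | 0, f, _, _ => by simp
  | t + 1, f, g, hfg => by
    have ih := Fin.apply_zero_eq_apply_last_mul_prod (f ∘ Fin.castSucc) (g ∘ Fin.castSucc)
      fun k => hfg k.castSucc
    simp only [Function.comp_apply, Fin.castSucc_zero, hfg (Fin.last t)] at ih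
    rw [ih, Fin.prod_univ_castSucc]
    ac_rfl

theorem reduction_primitive_twig_general (R : Type*) [CommRing R] (M : Type*) [AddCancelCommMonoid M]
    (t : ℕ) (aV : M) (a : Fin t → M)
    (V : AddMonoidAlgebra R M) (Vs N : Fin t → AddMonoidAlgebra R M)
    (L : Fin (t + 1) → AddMonoidAlgebra R M)
    (h1 : L 0 = AddMonoidAlgebra.single aV (1 : R) * V)
    (h2 : ∀ k : Fin t, AddMonoidAlgebra.single (a k) (1 : R) * L k.castSucc
        = L k.succ * N k)
    (h3 : L (Fin.last t) = AddMonoidAlgebra.single aV (1 : R))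
    (h4 : ∀ k : Fin t, N k = AddMonoidAlgebra.single (a k) (1 : R) * Vs k) :
    V = ∏ k, Vs k := by
  have hstep : ∀ k : Fin t, L k.castSucc = L k.succ * Vs k := fun k =>
    AddMonoidAlgebra.isLeftRegular_single_one (a k) <| by
      simp only [h2, h4, mul_left_comm]
  have htelescope := Fin.apply_zero_eq_apply_last_mul_prod L Vs hstep
  rw [h1, h3] at htelescope
  exact AddMonoidAlgebra.isLeftRegular_single_one aV htelescope

/-- Algebraic form of the main Theorem (`reduction-primitive-twig`).
Under hypotheses (i)-(iv), the cylinder counting function factors as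
`V = V_1 * ⋯ * V_t` in `R[M]`, i.e. `N(V,β) = Σ_{β₁+⋯+β_t=β} Π_s N(V_s,β_s)`. -/
theorem reduction_primitive_twig (R : Type*) [CommRing R] (M : Type*) [AddCancelCommMonoid M]
    (t : ℕ) (ht : 1 ≤ t) (aV : M) (a : Fin t → M)
    (V : AddMonoidAlgebra R M) (Vs N : Fin t → AddMonoidAlgebra R M)
    (L : Fin (t + 1) → AddMonoidAlgebra R M)
    (h1 : L 0 = AddMonoidAlgebra.single aV (1 : R) * V)
    (h2 : ∀ k : Fin t, AddMonoidAlgebra.single (a k) (1 : R) * L k.castSucc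
        = L k.succ * N k)
    (h3 : L (Fin.last t) = AddMonoidAlgebra.single aV (1 : R))
    (h4 : ∀ k : Fin t, N k = AddMonoidAlgebra.single (a k) (1 : R) * Vs k) :
    V = ∏ k, Vs k :=
  reduction_primitive_twig_general R M t aV a V Vs N L h1 h2 h3 h4
end

section
/- Let Φ : X → V be a continuous closed map of topological spaces, let U ⊆ X be an open subset, and let M' ⊆ U be a subset that is clopen in the subspace topology of U (equivalently, a union of connected components of U when U is locally connected). Define W = V ∖ Φ( cl_X(M') ∖ U ), where cl_X(M') is the closure of M' in X. Then W is open in V, and M' ∩ Φ^{-1}(W) is clopen in the subspace topology of Φ^{-1}(W); in particular M' ∩ Φ^{-1}(W) ⊆ U. (This is the topological core of the paper's Lemma 'restr-proper-connected-components': with X the moduli space M̄(Y, p, β) of stable maps, Φ = (st, ev_I), U the smooth locus M^{sm}, and M' a union of connected components of the smooth locus whose closure consists of stable maps with stable domain, one obtains an open W over which M' cuts out connected components of the full moduli space.) -/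
/-- Topological core of Lemma `restr-proper-connected-components`.
Given a continuous closed map `Φ : X → V`, an open `U ⊆ X`, and `M' ⊆ U` clopen
in the subspace topology of `U`, the set `W = V ∖ Φ(cl_X(M') ∖ U)` is open and
`M' ∩ Φ⁻¹(W)` is clopen in the subspace topology of `Φ⁻¹(W)`; in particular
`M' ∩ Φ⁻¹(W) ⊆ U`. -/
theorem clopen_selection {X V : Type*} [TopologicalSpace X] [TopologicalSpace V]
    (Φ : X → V) (hcont : Continuous Φ) (hclosed : IsClosedMap Φ)
    (U : Set X) (hU : IsOpen U) (M' : Set X) (hMU : M' ⊆ U)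
    (hclopen : IsClopen (Subtype.val ⁻¹' M' : Set U))
    (W : Set V) (hW : W = (Φ '' (closure M' \ U))ᶜ) :
    IsOpen W ∧
    IsClopen (Subtype.val ⁻¹' (M' ∩ Φ ⁻¹' W) : Set (Φ ⁻¹' W)) ∧
    M' ∩ Φ ⁻¹' W ⊆ U := by
  have hMopen : IsOpen M' := by
    have := hU.isOpenMap_subtype_val _ hclopen.isOpen
    rwa [Subtype.image_preimage_coe, Set.inter_eq_right.mpr hMU] at this
  have hkey : closure M' ∩ U ⊆ M' := by
    rintro x ⟨hxc, hxU⟩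
    have h1 : (⟨x, hxU⟩ : U) ∈ closure (Subtype.val ⁻¹' M') :=
      hU.isOpenMap_subtype_val.preimage_closure_subset_closure_preimage hxc
    exact hclopen.isClosed.closure_subset h1
  have hWopen : IsOpen W := by
    rw [hW]
    exact (hclosed _ (isClosed_closure.sdiff hU)).isOpen_compl
  refine ⟨hWopen, ⟨?_, ?_⟩, fun x hx => hMU hx.1⟩
  · rw [isClosed_induced_iff]
    refine ⟨closure M', isClosed_closure, ?_⟩
    ext ⟨x, hx⟩
    simp only [Set.mem_preimage, Set.mem_inter_iff]
    constructor
    · intro hxc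
      have hxU : x ∈ U := by
        by_contra h
        exact (hW ▸ hx) ⟨x, ⟨hxc, h⟩, rfl⟩
      exact ⟨hkey ⟨hxc, hxU⟩, hx⟩
    · exact fun h => subset_closure h.1
  · exact (hMopen.inter (hWopen.preimage hcont)).preimage continuous_subtype_val
end
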